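/- arXiv:2111.15324 — 7 statements merged into one kernel-verified Lean document; each statement's English description precedes it below -/
import Mathlib

section
/- Let P : [a,b] → ℝ be a nondecreasing polynomial function of degree at most m ≥ 1. Then P(a + (b-a)/(2m²+1)) ≤ P(a) + (2m²/(2m²+1))·(P(b) - P(a)). -/
/-!
Put `t = (b - a) / (2m² + 1)` and interpolate `P` at the `n = m + 1` nodes `a + (j+1)² t`,
which lie in `[a + t, b]` as soon as `m ≥ 2`. At the point `a` the `i`-th Lagrange basis
polynomial has absolute value `2 (n!)² / ((n-1-i)! (n+1+i)!) ≤ 2`, so the Lebesgue function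
there is at most `2n`. Monotonicity traps every node value between `P(a + t)` and `P(b)`, hence
`P(a)` lies at most `n (P(b) - P(a + t))` below their midpoint, i.e.
`2 (P(a + t) - P(a)) ≤ (2n - 1) (P(b) - P(a + t))`, which rearranges to the claim.
For `m = 1` the node `a + 4t` falls outside `[a, b]`, but then `P` is affine.
-/

open Finset Polynomial Nat

namespace Lagrange

variable {ι : Type*} [DecidableEq ι]

section Field

variable {F : Type*} [Field F]

theorem eval_basis_eq_prod (s : Finset ι) (v : ι → F) (i : ι) (x : F) :
    (Lagrange.basis s v i).eval x = ∏ j ∈ s.erase i, (x - v j) / (v i - v j) := by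
  simp only [Lagrange.basis, eval_prod, basisDivisor, eval_mul, eval_C, eval_sub, eval_X,
    div_eq_inv_mul]

theorem eval_basis_affine (s : Finset ι) (v : ι → F) (i : ι) {c t : F} (ht : t ≠ 0) (x : F) :
    (Lagrange.basis s (fun j => c + t * v j) i).eval (c + t * x) =
      (Lagrange.basis s v i).eval x := by
  simp only [eval_basis_eq_prod]
  refine prod_congr rfl fun j _ => ?_
  rw [show c + t * x - (c + t * v j) = t * (x - v j) by ring,
    show c + t * v i - (c + t * v j) = t * (v i - v j) by ring, mul_div_mul_left _ _ ht]

end Field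

variable {F : Type*} [Field F] [LinearOrder F] [IsStrictOrderedRing F]

theorem abs_eval_sub_le_mul_sum_abs_eval_basis {s : Finset ι} {v : ι → F} (hvs : Set.InjOn v s)
    (hs : s.Nonempty) {P : F[X]} (hP : P.degree < #s) {q d : F}
    (hq : ∀ i ∈ s, |P.eval (v i) - q| ≤ d) (x : F) :
    |P.eval x - q| ≤ d * ∑ i ∈ s, |(Lagrange.basis s v i).eval x| := by
  have hsum : ∑ i ∈ s, (Lagrange.basis s v i).eval x = 1 := by
    simpa [eval_finsetSum] using congrArg (eval x) (sum_basis hvs hs)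
  have hrepr : P.eval x - q = ∑ i ∈ s, (P.eval (v i) - q) * (Lagrange.basis s v i).eval x := by
    conv_lhs => rw [eq_interpolate hvs hP]
    simp only [interpolate_apply, eval_finsetSum, eval_mul, eval_C, sub_mul, sum_sub_distrib,
      ← mul_sum, hsum, mul_one]
  rw [hrepr, mul_sum]
  refine (abs_sum_le_sum_abs _ _).trans (sum_le_sum fun i hi => ?_)
  rw [abs_mul]
  exact mul_le_mul_of_nonneg_right (hq i hi) (abs_nonneg _)

end Lagrange

theorem Nat.factorial_mul_factorial_le_factorial_sub_mul_factorial_add {n u : ℕ} (h : u ≤ n) :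
    n ! * n ! ≤ (n - u)! * (n + u)! := by
  have hdesc : n.descFactorial u ≤ (n + 1).ascFactorial u :=
    calc n.descFactorial u ≤ n ^ u := n.descFactorial_le_pow u
      _ ≤ (n + 1) ^ u := Nat.pow_le_pow_left n.le_succ u
      _ ≤ (n + 1).ascFactorial u := (n + 1).pow_succ_le_ascFactorial u
  calc n ! * n ! = (n - u)! * n.descFactorial u * n ! := by rw [factorial_mul_descFactorial h]
    _ ≤ (n - u)! * (n + 1).ascFactorial u * n ! := by gcongr
    _ = (n - u)! * (n + u)! := by rw [← factorial_mul_ascFactorial]; ring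

theorem prod_range_abs_sub (i : ℕ) : ∏ j ∈ range i, |(i : ℝ) - j| = i ! := by
  rw [← Nat.descFactorial_self, Nat.descFactorial_eq_prod_range, Nat.cast_prod]
  refine prod_congr rfl fun j hj => ?_
  have hji : j ≤ i := (mem_range.1 hj).le
  rw [Nat.cast_sub hji, abs_of_nonneg (sub_nonneg.2 (Nat.cast_le.2 hji))]

theorem prod_Ico_abs_sub (i n : ℕ) : ∏ j ∈ Ico (i + 1) n, |(i : ℝ) - j| = (n - (i + 1))! := by
  rw [prod_Ico_eq_prod_range, ← prod_range_add_one_eq_factorial, Nat.cast_prod]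
  refine prod_congr rfl fun k _ => ?_
  push_cast
  rw [show (i : ℝ) - (i + 1 + k) = -(k + 1) by ring, abs_neg, abs_of_pos (by positivity)]

section SquareNodes

variable {n i : ℕ}

theorem prod_range_erase_abs_sub (hi : i < n) :
    ∏ j ∈ (range n).erase i, |(i : ℝ) - j| = i ! * (n - 1 - i)! := by
  have hsplit : (range n).erase i = range i ∪ Ico (i + 1) n := by
    ext j; simp only [mem_erase, mem_range, mem_union, mem_Ico]; omega
  have hdisj : Disjoint (range i) (Ico (i + 1) n) := by
    simp only [disjoint_left, mem_range, mem_Ico]; omega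
  rw [hsplit, prod_union hdisj, prod_range_abs_sub, prod_Ico_abs_sub, Nat.sub_sub, add_comm 1]

theorem mul_prod_range_erase_add_one (hi : i < n) :
    ((i : ℝ) + 1) * ∏ j ∈ (range n).erase i, ((j : ℝ) + 1) = n ! := by
  rw [mul_prod_erase (range n) (fun j : ℕ => (j : ℝ) + 1) (mem_range.2 hi),
    ← prod_range_add_one_eq_factorial]
  push_cast; rfl

theorem mul_prod_range_erase_add_add_two (hi : i < n) :
    (2 * (i : ℝ) + 2) * (i + 1)! * ∏ j ∈ (range n).erase i, ((i : ℝ) + j + 2) =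
      (n + i + 1)! := by
  rw [mul_right_comm, show 2 * (i : ℝ) + 2 = i + i + 2 by ring,
    mul_prod_erase (range n) (fun j : ℕ => (i : ℝ) + j + 2) (mem_range.2 hi),
    show n + i + 1 = i + 1 + n by ring, ← Nat.factorial_mul_ascFactorial (i + 1) n,
    Nat.ascFactorial_eq_prod_range]
  push_cast
  rw [mul_comm]
  exact congrArg _ (prod_congr rfl fun j _ => by ring)

theorem sq_prod_range_erase_add_one_le (hi : i < n) :
    (∏ j ∈ (range n).erase i, ((j : ℝ) + 1)) ^ 2 ≤
      2 * ((∏ j ∈ (range n).erase i, |(i : ℝ) - j|) *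
        ∏ j ∈ (range n).erase i, ((i : ℝ) + j + 2)) := by
  have hfact : (n ! : ℝ) * n ! ≤ (n - 1 - i)! * (n + i + 1)! := by
    have := Nat.factorial_mul_factorial_le_factorial_sub_mul_factorial_add (u := i + 1) hi
    rw [show n - (i + 1) = n - 1 - i by omega, show n + (i + 1) = n + i + 1 by omega] at this
    exact_mod_cast this
  rw [prod_range_erase_abs_sub hi]
  rw [← mul_prod_range_erase_add_one hi, ← mul_prod_range_erase_add_add_two hi,
    Nat.factorial_succ] at hfact
  push_cast at hfact
  have hi0 : (0 : ℝ) < ((i : ℝ) + 1) ^ 2 := by positivity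
  refine le_of_mul_le_mul_left ?_ hi0
  nlinarith [hfact]

theorem abs_eval_basis_sq_nodes_zero_le_two (hi : i ∈ range n) :
    |(Lagrange.basis (range n) (fun j : ℕ => ((j : ℝ) + 1) ^ 2) i).eval 0| ≤ 2 := by
  have hterm : ∀ j ∈ (range n).erase i,
      |(0 - ((j : ℝ) + 1) ^ 2) / (((i : ℝ) + 1) ^ 2 - ((j : ℝ) + 1) ^ 2)| =
        ((j : ℝ) + 1) ^ 2 / (|(i : ℝ) - j| * ((i : ℝ) + j + 2)) := by
    intro j _
    rw [show ((i : ℝ) + 1) ^ 2 - ((j : ℝ) + 1) ^ 2 = (i - j) * (i + j + 2) by ring, abs_div,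
      abs_mul, zero_sub, abs_neg, abs_of_nonneg (sq_nonneg _),
      abs_of_pos (by positivity : (0 : ℝ) < i + j + 2)]
  have hden : 0 < ∏ j ∈ (range n).erase i, (|(i : ℝ) - j| * ((i : ℝ) + j + 2)) := by
    refine prod_pos fun j hj => mul_pos (abs_pos.2 (sub_ne_zero.2 ?_)) (by positivity)
    exact_mod_cast (ne_of_mem_erase hj).symm
  rw [Lagrange.eval_basis_eq_prod, abs_prod, prod_congr rfl hterm, prod_div_distrib,
    div_le_iff₀ hden, prod_pow, prod_mul_distrib]
  exact sq_prod_range_erase_add_one_le (mem_range.1 hi)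

end SquareNodes

theorem two_mul_sub_eval_le_of_monotoneOn {P : ℝ[X]} {n : ℕ} (hn : 0 < n) (hP : P.degree < n)
    {a b t : ℝ} (ht : 0 < t) (hb : a + t * n ^ 2 ≤ b)
    (hmono : MonotoneOn (fun x => P.eval x) (Set.Icc (a + t) b)) :
    2 * (P.eval (a + t) - P.eval a) ≤ (2 * n - 1) * (P.eval b - P.eval (a + t)) := by
  set w : ℕ → ℝ := fun j => ((j : ℝ) + 1) ^ 2 with hw
  set v : ℕ → ℝ := fun j => a + t * w j with hv
  set Q := P.eval (a + t)
  set B := P.eval b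
  have hnode : ∀ j ∈ range n, v j ∈ Set.Icc (a + t) b := by
    intro j hj
    have hjn : (j : ℝ) + 1 ≤ n := by exact_mod_cast mem_range.1 hj
    have hj1 : (1 : ℝ) ≤ ((j : ℝ) + 1) ^ 2 := one_le_pow₀ (by simp)
    constructor <;> simp only [hv, hw]
    · nlinarith
    · nlinarith [pow_le_pow_left₀ (by positivity) hjn 2]
  have hlow : a + t ∈ Set.Icc (a + t) b := by simpa [hv, hw] using hnode 0 (by simpa)
  have hhigh : b ∈ Set.Icc (a + t) b := ⟨hlow.2, le_rfl⟩
  have hvs : Set.InjOn v (range n) := by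
    intro i _ j _ hij
    have hsq : ((i : ℝ) + 1) ^ 2 = ((j : ℝ) + 1) ^ 2 := by
      simpa [hv, hw, ht.ne'] using hij
    have : (i : ℝ) = j := by linarith [(sq_eq_sq₀ (by positivity) (by positivity)).1 hsq]
    exact_mod_cast this
  have hmid : ∀ i ∈ range n, |P.eval (v i) - (Q + B) / 2| ≤ (B - Q) / 2 := by
    intro i hi
    have hQi := hmono hlow (hnode i hi) (hnode i hi).1
    have hiB := hmono (hnode i hi) hhigh (hnode i hi).2
    rw [abs_le]; constructor <;> linarith
  have hlebesgue := Lagrange.abs_eval_sub_le_mul_sum_abs_eval_basis hvs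
    (nonempty_range_iff.2 hn.ne') (by rwa [card_range]) hmid a
  have hbasis : ∀ i, (Lagrange.basis (range n) v i).eval a =
      (Lagrange.basis (range n) w i).eval 0 := fun i => by
    rw [← Lagrange.eval_basis_affine _ w i (c := a) ht.ne' 0, mul_zero, add_zero]
  simp only [hbasis] at hlebesgue
  have hsum : ∑ i ∈ range n, |(Lagrange.basis (range n) w i).eval 0| ≤ n * 2 :=
    calc _ ≤ ∑ _i ∈ range n, (2 : ℝ) :=
          sum_le_sum fun i hi => abs_eval_basis_sq_nodes_zero_le_two hi
      _ = n * 2 := by simp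
  have hQB : Q ≤ B := hmono hlow hhigh hlow.2
  nlinarith [(abs_le.1 hlebesgue).1,
    mul_le_mul_of_nonneg_left hsum (by linarith : 0 ≤ (B - Q) / 2)]

theorem add_div_mul_succ_sq_le {a b : ℝ} (hab : a ≤ b) {m : ℕ} (hm : 2 ≤ m) :
    a + (b - a) / (2 * (m : ℝ) ^ 2 + 1) * ((m + 1 : ℕ) : ℝ) ^ 2 ≤ b := by
  have hm' : (2 : ℝ) ≤ m := by exact_mod_cast hm
  have hsq : ((m + 1 : ℕ) : ℝ) ^ 2 ≤ 2 * (m : ℝ) ^ 2 + 1 := by push_cast; nlinarith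
  have := mul_le_mul_of_nonneg_left hsq
    (div_nonneg (sub_nonneg.2 hab) (by positivity : (0 : ℝ) ≤ 2 * (m : ℝ) ^ 2 + 1))
  rw [div_mul_cancel₀ _ (by positivity)] at this
  linarith

/-- Markov-type estimate: a nondecreasing polynomial of degree at most `m ≥ 1` on `[a,b]`
satisfies `P(a + (b-a)/(2m²+1)) ≤ P(a) + (2m²/(2m²+1))·(P(b)-P(a))`. -/
theorem stmt0 (a b : ℝ) (hab : a < b) (m : ℕ) (hm : 1 ≤ m)
    (P : Polynomial ℝ) (hdeg : P.natDegree ≤ m)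
    (hmono : MonotoneOn (fun x => P.eval x) (Set.Icc a b)) :
    P.eval (a + (b - a) / (2 * (m : ℝ) ^ 2 + 1)) ≤
      P.eval a + (2 * (m : ℝ) ^ 2 / (2 * (m : ℝ) ^ 2 + 1)) * (P.eval b - P.eval a) := by
  rw [div_mul_eq_mul_div, ← sub_le_iff_le_add', le_div_iff₀ (by positivity)]
  rcases hm.eq_or_lt with rfl | hm2
  · have hab' := hmono (Set.left_mem_Icc.2 hab.le) (Set.right_mem_Icc.2 hab.le) hab.le
    have hlin : ∀ x, P.eval x = P.coeff 1 * x + P.coeff 0 := fun x => by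
      conv_lhs => rw [eq_X_add_C_of_natDegree_le_one hdeg]
      simp
    simp only [hlin, Nat.cast_one] at hab' ⊢
    nlinarith
  · set t := (b - a) / (2 * (m : ℝ) ^ 2 + 1)
    have ht : 0 < t := div_pos (sub_pos.2 hab) (by positivity)
    have hend := add_div_mul_succ_sq_le hab.le hm2
    have key := two_mul_sub_eval_le_of_monotoneOn (succ_pos m)
      ((degree_le_of_natDegree_le hdeg).trans_lt (WithBot.coe_lt_coe.2 m.lt_succ_self)) ht hend
      (hmono.mono (Set.Icc_subset_Icc_left (by linarith)))
    have hm2' : (2 : ℝ) ≤ m := by exact_mod_cast hm2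
    push_cast at key hend
    have hfirst : a + t ≤ b := by nlinarith
    have hQB := hmono ⟨by linarith, hfirst⟩ (Set.right_mem_Icc.2 hab.le) hfirst
    have hcoef : 2 * ((m : ℝ) + 1) - 1 ≤ 4 * (m : ℝ) ^ 2 := by nlinarith
    nlinarith [mul_le_mul_of_nonneg_right hcoef (sub_nonneg.2 hQB)]
end

section
/- If P : [-1,1] → ℝ is a polynomial of degree at most m with P monotone nondecreasing on [0,1] (viewed after rescaling), P(0) = 0 and P(1) = 1, then P(1/(2m²+1)) ≤ 2m²/(2m²+1). -/
/-! The endpoint case of Markov's inequality, `|P'(1)| ≤ n² max_{[-1,1]} |P|` (the extremal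
property of the Chebyshev polynomial `T n`), applied to `P` on `[x, 1]`, where monotonicity keeps
`P` between `P x` and `1`, gives `(1 - x) P'(x) ≤ m² (1 - P x)`. Hence `(1 - P x) / (1 - x) ^ (2m²)`
is nondecreasing on `[0, t]`, so `1 - P t ≥ (1 - t) ^ (2m²) ≥ t` for `t = 1 / (2m² + 1)`; the last
step is `(1 + 1/k) ^ k ≤ e ≤ k + 1`. -/

open Polynomial Set Topology

theorem Polynomial.derivative_eval_one_le_of_abs_le {n : ℕ} {P : ℝ[X]} {M : ℝ}
    (hdeg : P.natDegree ≤ n) (hbnd : ∀ x ∈ Icc (-1 : ℝ) 1, |P.eval x| ≤ M) :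
    P.derivative.eval 1 ≤ n ^ 2 * M := by
  refine ge_of_tendsto (x := 𝓝[>] M)
    (((continuous_const_mul _).tendsto M).mono_left nhdsWithin_le_nhds) ?_
  filter_upwards [self_mem_nhdsWithin] with M' (hM' : M < M')
  have hM'pos : 0 < M' := ((abs_nonneg _).trans (hbnd 1 (by norm_num))).trans_lt hM'
  have hscaled := Chebyshev.eval_iterate_derivative_le_of_forall_abs_le_one (k := 1) (x := 1) le_rfl
    (degree_le_of_natDegree_le ((natDegree_C_mul_le M'⁻¹ P).trans hdeg))
    fun x hx => by
      rw [eval_mul, eval_C, abs_mul, abs_inv, abs_of_pos hM'pos, inv_mul_le_one₀ hM'pos]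
      exact (hbnd x hx).trans hM'.le
  rw [Function.iterate_one, derivative_C_mul, eval_mul, eval_C,
    Chebyshev.derivative_T_eval_one, inv_mul_le_iff₀ hM'pos] at hscaled
  simpa [mul_comm] using hscaled

theorem Polynomial.sub_mul_derivative_eval_le_of_monotoneOn {n : ℕ} {P : ℝ[X]} {a b : ℝ}
    (hdeg : P.natDegree ≤ n) (hab : a ≤ b) (hmono : MonotoneOn P.eval (Icc a b)) :
    (b - a) * P.derivative.eval a ≤ n ^ 2 * (P.eval b - P.eval a) := by
  -- `ℓ` maps `[-1, 1]` onto `[a, b]` with `ℓ 1 = a`; `Q` is `P ∘ ℓ` reflected and recentred.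
  set ℓ : ℝ[X] := C a + C ((b - a) / 2) * (1 - X)
  set Q : ℝ[X] := C ((P.eval a + P.eval b) / 2) - P.comp ℓ
  have hℓ : ∀ s ∈ Icc (-1 : ℝ) 1, ℓ.eval s ∈ Icc a b := by
    rintro s ⟨hs₁, hs₂⟩
    simp only [ℓ, eval_add, eval_mul, eval_C, eval_sub, eval_one, eval_X]
    constructor <;> nlinarith
  have hQdeg : Q.natDegree ≤ n := by
    refine (natDegree_sub_le _ _).trans (max_le (by simp) (natDegree_comp_le.trans ?_))
    have : ℓ.natDegree ≤ 1 := by simp only [ℓ]; compute_degree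
    nlinarith
  have hQbnd : ∀ s ∈ Icc (-1 : ℝ) 1, |Q.eval s| ≤ (P.eval b - P.eval a) / 2 := by
    intro s hs
    have hlo := hmono ⟨le_rfl, hab⟩ (hℓ s hs) (hℓ s hs).1
    have hhi := hmono (hℓ s hs) ⟨hab, le_rfl⟩ (hℓ s hs).2
    simp only [Q, eval_sub, eval_C, eval_comp]
    rw [abs_le]
    constructor <;> linarith
  have hQ' : Q.derivative.eval 1 = (b - a) / 2 * P.derivative.eval a := by
    simp [Q, ℓ, derivative_comp]
  have := derivative_eval_one_le_of_abs_le hQdeg hQbnd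
  rw [hQ'] at this
  linarith

theorem div_one_sub_pow_le_of_hasDerivAt {u u' : ℝ → ℝ} {K : ℕ} {a b : ℝ} (hab : a ≤ b)
    (hb : b < 1) (hu : ∀ x ∈ Icc a b, HasDerivAt u (u' x) x)
    (h : ∀ x ∈ Ioo a b, 0 ≤ (1 - x) * u' x + K * u x) :
    u a / (1 - a) ^ K ≤ u b / (1 - b) ^ K := by
  have hderiv : ∀ x ∈ Icc a b, HasDerivAt (fun y => u y / (1 - y) ^ K)
      (((1 - x) * u' x + K * u x) / (1 - x) ^ (K + 1)) x := by
    intro x hx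
    have hx₁ : 1 - x ≠ 0 := by linarith [hx.2]
    have hv : HasDerivAt (fun y => (1 - y) ^ K) (K * (1 - x) ^ (K - 1) * -1) x := by
      simpa using ((hasDerivAt_id' x).const_sub 1).fun_pow K
    refine ((hu x hx).fun_div hv (pow_ne_zero K hx₁)).congr_deriv ?_
    rcases K with _ | K
    · simp [field]
    · simp only [Nat.add_sub_cancel, pow_succ]
      field
  refine monotoneOn_of_hasDerivWithinAt_nonneg (convex_Icc a b)
    (fun x hx => (hderiv x hx).continuousAt.continuousWithinAt)
    (fun x hx => (hderiv x (interior_subset hx)).hasDerivWithinAt) (fun x hx => ?_)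
    ⟨le_rfl, hab⟩ ⟨hab, le_rfl⟩ hab
  rw [interior_Icc] at hx
  exact div_nonneg (h x hx) (pow_nonneg (by linarith [hx.2]) _)

theorem inv_add_one_le_one_sub_inv_add_one_pow {k : ℕ} (hk : 2 ≤ k) :
    ((k : ℝ) + 1)⁻¹ ≤ (1 - ((k : ℝ) + 1)⁻¹) ^ k := by
  have hk₀ : (0 : ℝ) < k := by positivity
  have hk₂ : (2 : ℝ) ≤ k := by exact_mod_cast hk
  have hrw : 1 - ((k : ℝ) + 1)⁻¹ = (1 + (k : ℝ)⁻¹)⁻¹ := by field_simp; ring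
  rw [hrw, inv_pow]
  refine inv_anti₀ (by positivity) (Real.one_add_inv_pow_le_exp.trans ?_)
  linarith [Real.exp_one_lt_d9]

/-- A polynomial of degree at most `m ≥ 1`, nondecreasing on `[0,1]`, with `P(0)=0` and
`P(1)=1`, satisfies `P(1/(2m²+1)) ≤ 2m²/(2m²+1)`. -/
theorem stmt1 (m : ℕ) (hm : 1 ≤ m) (P : Polynomial ℝ) (hdeg : P.natDegree ≤ m)
    (hmono : MonotoneOn (fun x => P.eval x) (Set.Icc (0 : ℝ) 1))
    (h0 : P.eval 0 = 0) (h1 : P.eval 1 = 1) :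
    P.eval (1 / (2 * (m : ℝ) ^ 2 + 1)) ≤ 2 * (m : ℝ) ^ 2 / (2 * (m : ℝ) ^ 2 + 1) := by
  set t : ℝ := 1 / (2 * (m : ℝ) ^ 2 + 1)
  have hm₁ : (1 : ℝ) ≤ m := by exact_mod_cast hm
  have ht₀ : 0 ≤ t := by positivity
  have ht₁ : t < 1 := by rw [div_lt_one (by positivity)]; nlinarith
  have hstep : ∀ x ∈ Ioo 0 t,
      0 ≤ (1 - x) * -P.derivative.eval x + ((2 * m ^ 2 : ℕ) : ℝ) * (1 - P.eval x) := by
    intro x hx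
    have hx₁ : x ≤ 1 := (hx.2.trans ht₁).le
    have hMarkov := sub_mul_derivative_eval_le_of_monotoneOn hdeg hx₁
      (hmono.mono (Icc_subset_Icc hx.1.le le_rfl))
    have hPx : P.eval x ≤ 1 := h1 ▸ hmono ⟨hx.1.le, hx₁⟩ ⟨zero_le_one, le_rfl⟩ hx₁
    push_cast
    nlinarith
  have hcomp : (1 - t) ^ (2 * m ^ 2) ≤ 1 - P.eval t := by
    have := div_one_sub_pow_le_of_hasDerivAt (u := fun x => 1 - P.eval x)
      ht₀ ht₁ (fun x _ => (P.hasDerivAt x).const_sub 1) hstep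
    rwa [h0, sub_zero, one_pow, div_one, le_div_iff₀ (pow_pos (by linarith) _),
      one_mul] at this
  have hpow := inv_add_one_le_one_sub_inv_add_one_pow (k := 2 * m ^ 2) (by nlinarith)
  rw [← one_div] at hpow
  push_cast at hpow
  have h1t : 1 - t = 2 * (m : ℝ) ^ 2 / (2 * (m : ℝ) ^ 2 + 1) := by simp only [t]; field_simp; ring
  linarith
end

section
/- Let f : [a,b] → ℝ be a nondecreasing continuous function, p ≥ 1 a real number, and (fₙ) a sequence of nondecreasing functions on [a,b] such that ‖fₙ - f‖_p → 0 (convergence in L^p norm). If (xₙ) is a sequence in [a,b] with xₙ → a and fₙ(xₙ) ≥ f(xₙ) for all n, then fₙ(xₙ) → f(a) and f(xₙ) → f(a). -/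
/-!
Continuity gives `f(xₙ) → f(a)`, and `f(xₙ) ≤ fₙ(xₙ)` is the lower half of the claim for
`fₙ(xₙ)`. For the upper half fix `a < c ≤ b`: if `fₙ(xₙ) ≥ f(c) + ε`, monotonicity of `fₙ` and
of `f` gives `fₙ - f ≥ ε` on all of `[xₙ, c]`, so `‖fₙ - f‖_p^p ≥ (c - xₙ) εᵖ`, which stays bounded
away from `0` as `xₙ → a`. Hence eventually `fₙ(xₙ) < f(c) + ε`, and `f(c)` is close to `f(a)`
for `c` close to `a`.
-/

open MeasureTheory Filter Set Topology

lemma tendsto_zero_of_tendsto_rpow_one_div {ι : Type*} {l : Filter ι} {u : ι → ℝ} {p : ℝ}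
    (hp : 0 < p) (hu : ∀ i, 0 ≤ u i) (h : Tendsto (fun i => u i ^ (1 / p)) l (𝓝 0)) :
    Tendsto u l (𝓝 0) := by
  have hpow := (Real.continuousAt_rpow_const 0 p (Or.inr hp.le)).tendsto.comp h
  rw [Real.zero_rpow hp.ne'] at hpow
  refine hpow.congr fun i => ?_
  simp only [Function.comp_apply, ← Real.rpow_mul (hu i), one_div_mul_cancel hp.ne',
    Real.rpow_one]

lemma mul_rpow_sub_le_integral_abs_sub_rpow {a b c x₀ p : ℝ} {F f : ℝ → ℝ}
    (hF : MonotoneOn F (Icc a b)) (hf : MonotoneOn f (Icc a b)) (hp : 0 ≤ p)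
    (hax₀ : a ≤ x₀) (hx₀c : x₀ ≤ c) (hcb : c ≤ b) (hle : f c ≤ F x₀)
    (hint : IntervalIntegrable (fun x => |F x - f x| ^ p) volume a b) :
    (c - x₀) * (F x₀ - f c) ^ p ≤ ∫ x in a..b, |F x - f x| ^ p := by
  have hx₀_mem : x₀ ∈ Icc a b := ⟨hax₀, hx₀c.trans hcb⟩
  have hc_mem : c ∈ Icc a b := ⟨hax₀.trans hx₀c, hcb⟩
  have hgap : ∀ y ∈ Icc x₀ c, (F x₀ - f c) ^ p ≤ |F y - f y| ^ p := by
    intro y hy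
    have hy_mem : y ∈ Icc a b := ⟨hax₀.trans hy.1, hy.2.trans hcb⟩
    have hFy := hF hx₀_mem hy_mem hy.1
    have hfy := hf hy_mem hc_mem hy.2
    exact Real.rpow_le_rpow (by linarith) ((by linarith : F x₀ - f c ≤ F y - f y).trans
      (le_abs_self _)) hp
  have hint_sub : IntervalIntegrable (fun x => |F x - f x| ^ p) volume x₀ c := by
    refine hint.mono_set ?_
    rw [uIcc_of_le hx₀c, uIcc_of_le (hax₀.trans (hx₀c.trans hcb))]
    exact Icc_subset_Icc hax₀ hcb
  calc (c - x₀) * (F x₀ - f c) ^ p = ∫ _ in x₀..c, (F x₀ - f c) ^ p := by simp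
    _ ≤ ∫ x in x₀..c, |F x - f x| ^ p :=
      intervalIntegral.integral_mono_on hx₀c intervalIntegrable_const hint_sub hgap
    _ ≤ ∫ x in a..b, |F x - f x| ^ p :=
      intervalIntegral.integral_mono_interval hax₀ hx₀c hcb
        (ae_of_all _ fun _ => Real.rpow_nonneg (abs_nonneg _) p) hint

lemma eventually_apply_lt_of_tendsto_integral_abs_sub_rpow {ι : Type*} {l : Filter ι}
    {a b c u p : ℝ} {f : ℝ → ℝ} {F : ι → ℝ → ℝ} {x : ι → ℝ} (hp : 0 ≤ p)
    (hf : MonotoneOn f (Icc a b)) (hF : ∀ i, MonotoneOn (F i) (Icc a b))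
    (hF_int : ∀ i, IntervalIntegrable (fun y => |F i y - f y| ^ p) volume a b)
    (hI : Tendsto (fun i => ∫ y in a..b, |F i y - f y| ^ p) l (𝓝 0))
    (hx_mem : ∀ i, x i ∈ Icc a b) (hx_lim : Tendsto x l (𝓝 a))
    (hc : c ∈ Ioc a b) (hu : f c < u) :
    ∀ᶠ i in l, F i (x i) < u := by
  obtain ⟨m, ham, hmc⟩ := exists_between hc.1
  have hbound : 0 < (c - m) * (u - f c) ^ p :=
    mul_pos (by linarith) (Real.rpow_pos_of_pos (by linarith) p)
  filter_upwards [hx_lim.eventually_lt_const ham, hI.eventually_lt_const hbound]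
    with i hxm hIi
  by_contra! hge
  have hkey := mul_rpow_sub_le_integral_abs_sub_rpow (hF i) hf hp (hx_mem i).1
    (by linarith) hc.2 (by linarith) (hF_int i)
  have hmono : (c - m) * (u - f c) ^ p ≤ (c - x i) * (F i (x i) - f c) ^ p :=
    mul_le_mul (by linarith) (Real.rpow_le_rpow (by linarith) (by linarith) hp)
      (Real.rpow_nonneg (by linarith) p) (by linarith)
  linarith

/-- If nondecreasing `fₙ` converge to a continuous nondecreasing `f` in the `Lᵖ` norm on `[a,b]`,
`xₙ → a` with `fₙ(xₙ) ≥ f(xₙ)`, then `fₙ(xₙ) → f(a)` and `f(xₙ) → f(a)`. -/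
theorem stmt2 (a b : ℝ) (hab : a < b) (p : ℝ) (hp : 1 ≤ p)
    (f : ℝ → ℝ) (hf_cont : ContinuousOn f (Set.Icc a b))
    (hf_mono : MonotoneOn f (Set.Icc a b))
    (F : ℕ → ℝ → ℝ) (hF_mono : ∀ n, MonotoneOn (F n) (Set.Icc a b))
    (hF_int : ∀ n, IntervalIntegrable (fun x => |F n x - f x| ^ p) volume a b)
    (hLp : Tendsto (fun n => (∫ x in a..b, |F n x - f x| ^ p) ^ (1 / p)) atTop (nhds 0))
    (x : ℕ → ℝ) (hx_mem : ∀ n, x n ∈ Set.Icc a b)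
    (hx_lim : Tendsto x atTop (nhds a))
    (hge : ∀ n, f (x n) ≤ F n (x n)) :
    Tendsto (fun n => F n (x n)) atTop (nhds (f a)) ∧
      Tendsto (fun n => f (x n)) atTop (nhds (f a)) := by
  have ha : a ∈ Icc a b := left_mem_Icc.2 hab.le
  have hfx : Tendsto (fun n => f (x n)) atTop (𝓝 (f a)) :=
    (hf_cont a ha).tendsto.comp
      (tendsto_nhdsWithin_of_tendsto_nhds_of_eventually_within x hx_lim (.of_forall hx_mem))
  have hI := tendsto_zero_of_tendsto_rpow_one_div (by linarith) (fun n =>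
    intervalIntegral.integral_nonneg hab.le fun y _ => Real.rpow_nonneg (abs_nonneg _) p) hLp
  refine ⟨tendsto_order.2 ⟨fun l hl => ?_, fun u hu => ?_⟩, hfx⟩
  · filter_upwards [hfx.eventually_const_lt hl] with n hn using hn.trans_le (hge n)
  · have := left_nhdsWithin_Ioc_neBot hab
    have hf_lt : ∀ᶠ c in 𝓝[Ioc a b] a, f c < u :=
      ((hf_cont a ha).eventually (gt_mem_nhds hu)).filter_mono
        (nhdsWithin_mono a Ioc_subset_Icc_self)
    obtain ⟨c, hfc, hc⟩ := (hf_lt.and self_mem_nhdsWithin).exists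
    exact eventually_apply_lt_of_tendsto_integral_abs_sub_rpow (by linarith) hf_mono hF_mono
      hF_int hI hx_mem hx_lim hc hfc
end

section
/- Let f be a real continuous function on a finite open interval (a,b), and let (fₙ) be a sequence of nondecreasing functions on (a,b) such that ∫_a^b |fₙ - f|^p → 0 for some 1 ≤ p < ∞. Then for any c, d with a < c < d < b, the sequence (fₙ) converges uniformly to f on [c,d]. -/
/-! If `|fₙ x - f x| ≥ ε` at a point `x` of `[c, d]`, then monotonicity of `fₙ` together with
the uniform continuity of `f` near `[c, d]` keeps `|fₙ - f| ≥ ε / 2` on a whole interval of a fixed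
length `δ` on one side of `x` (to the right if `fₙ x` lies above `f x`, to the left otherwise).
Then `∫ |fₙ - f|ᵖ ≥ δ (ε / 2)ᵖ`, which is impossible for large `n`. -/

open MeasureTheory Filter Set Metric

lemma IsCompact.exists_pos_closedBall_subset_and_dist_lt {α β : Type*} [PseudoMetricSpace α]
    [ProperSpace α] [PseudoMetricSpace β] {f : α → β} {K U : Set α} (hK : IsCompact K)
    (hU : IsOpen U) (hKU : K ⊆ U) (hf : ContinuousOn f U) {ε : ℝ} (hε : 0 < ε) :
    ∃ δ > 0, ∀ x ∈ K, closedBall x δ ⊆ U ∧ ∀ t ∈ closedBall x δ, dist (f t) (f x) < ε := by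
  obtain ⟨r, hr, hrU⟩ := hK.exists_cthickening_subset_open hU hKU
  obtain ⟨η, hη, hηf⟩ := Metric.uniformContinuousOn_iff.1
    ((hK.cthickening (r := r)).uniformContinuousOn_of_continuous (hf.mono hrU)) ε hε
  refine ⟨min r (η / 2), by positivity, fun x hx => ?_⟩
  have hball : closedBall x (min r (η / 2)) ⊆ cthickening r K :=
    (closedBall_subset_cthickening hx _).trans (cthickening_mono (min_le_left _ _) K)
  refine ⟨hball.trans hrU, fun t ht => hηf t (hball ht) x (hball (mem_closedBall_self ?_)) ?_⟩
  · positivity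
  · exact (mem_closedBall.1 ht).trans_lt ((min_le_right _ _).trans_lt (half_lt_self hη))

lemma exists_Icc_half_le_abs_sub_of_monotoneOn {f g : ℝ → ℝ} {x δ ε : ℝ} (hδ : 0 ≤ δ)
    (hg : MonotoneOn g (Icc (x - δ) (x + δ)))
    (hf : ∀ t ∈ Icc (x - δ) (x + δ), |f t - f x| < ε / 2) (hx : ε ≤ |g x - f x|) :
    ∃ u ∈ Icc (x - δ) x, ∀ t ∈ Icc u (u + δ), ε / 2 ≤ |g t - f t| := by
  have hxI : x ∈ Icc (x - δ) (x + δ) := ⟨by linarith, by linarith⟩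
  rcases le_abs'.1 hx with hbelow | habove
  · refine ⟨x - δ, ⟨le_rfl, by linarith⟩, fun t ht => ?_⟩
    have htI : t ∈ Icc (x - δ) (x + δ) := ⟨ht.1, by linarith [ht.2]⟩
    have hgt : g t ≤ g x := hg htI hxI (by linarith [ht.2])
    have hft := (abs_sub_lt_iff.1 (hf t htI)).2
    rw [abs_sub_comm]
    exact le_abs.2 (Or.inl (by linarith))
  · refine ⟨x, ⟨by linarith, le_rfl⟩, fun t ht => ?_⟩
    have htI : t ∈ Icc (x - δ) (x + δ) := ⟨by linarith [ht.1], ht.2⟩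
    have hgt : g x ≤ g t := hg hxI htI ht.1
    have hft := (abs_sub_lt_iff.1 (hf t htI)).1
    exact le_abs.2 (Or.inl (by linarith))

lemma mul_le_intervalIntegral_of_le_on {g : ℝ → ℝ} {a b u v K : ℝ} (hau : a ≤ u) (huv : u ≤ v)
    (hvb : v ≤ b) (hg : IntervalIntegrable g volume a b) (hg₀ : ∀ x ∈ Icc a b, 0 ≤ g x)
    (hK : ∀ x ∈ Icc u v, K ≤ g x) :
    (v - u) * K ≤ ∫ x in a..b, g x := by
  have hguv : IntervalIntegrable g volume u v :=
    hg.mono_set (by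
      rw [uIcc_of_le huv, uIcc_of_le (hau.trans (huv.trans hvb))]
      exact Icc_subset_Icc hau hvb)
  calc (v - u) * K = ∫ _ in u..v, K := by simp
    _ ≤ ∫ x in u..v, g x := intervalIntegral.integral_mono_on huv intervalIntegrable_const hguv hK
    _ ≤ ∫ x in a..b, g x := by
      refine intervalIntegral.integral_mono_interval hau huv hvb ?_ hg
      filter_upwards [ae_restrict_mem measurableSet_Ioc] with x hx
      exact hg₀ x (Ioc_subset_Icc_self hx)

lemma mul_rpow_le_intervalIntegral_abs_rpow {h : ℝ → ℝ} {a b u δ η p : ℝ} (hp : 0 ≤ p)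
    (hη : 0 ≤ η) (hau : a ≤ u) (hδ : 0 ≤ δ) (hub : u + δ ≤ b)
    (hint : IntervalIntegrable (fun x => |h x| ^ p) volume a b)
    (hle : ∀ x ∈ Icc u (u + δ), η ≤ |h x|) :
    δ * η ^ p ≤ ∫ x in a..b, |h x| ^ p := by
  have := mul_le_intervalIntegral_of_le_on hau (le_add_of_nonneg_right hδ) hub hint
    (fun x _ => by positivity) (fun x hx => Real.rpow_le_rpow hη (hle x hx) hp)
  rwa [add_sub_cancel_left] at this

theorem stmt4_general (a b : ℝ) (p : ℝ) (hp : 1 ≤ p)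
    (f : ℝ → ℝ) (hf_cont : ContinuousOn f (Set.Ioo a b))
    (F : ℕ → ℝ → ℝ) (hF_mono : ∀ n, MonotoneOn (F n) (Set.Ioo a b))
    (hF_int : ∀ n, IntervalIntegrable (fun x => |F n x - f x| ^ p) volume a b)
    (hLp : Tendsto (fun n => ∫ x in a..b, |F n x - f x| ^ p) atTop (nhds 0)) :
    ∀ c d : ℝ, a < c → c < d → d < b →
      TendstoUniformlyOn F f atTop (Set.Icc c d) := by
  intro c d hac _ hdb
  refine Metric.tendstoUniformlyOn_iff.2 fun ε hε => ?_
  obtain ⟨δ, hδ, hδf⟩ := isCompact_Icc.exists_pos_closedBall_subset_and_dist_lt isOpen_Ioo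
    (Icc_subset_Ioo hac hdb) hf_cont (half_pos hε)
  simp only [Real.closedBall_eq_Icc, Real.dist_eq] at hδf
  filter_upwards [hLp.eventually_lt_const (by positivity : 0 < δ * (ε / 2) ^ p)] with n hn x hx
  by_contra! hfar
  obtain ⟨hIoo, hfx⟩ := hδf x hx
  obtain ⟨u, hu, hgap⟩ := exists_Icc_half_le_abs_sub_of_monotoneOn hδ.le
    ((hF_mono n).mono hIoo) hfx (by rwa [Real.dist_eq, abs_sub_comm] at hfar)
  have hau : a ≤ u := (hIoo ⟨hu.1, by linarith [hu.2]⟩).1.le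
  have hub : u + δ ≤ b := (hIoo ⟨by linarith [hu.1], by linarith [hu.2]⟩).2.le
  have := mul_rpow_le_intervalIntegral_abs_rpow (by linarith) (by positivity) hau hδ.le hub
    (hF_int n) hgap
  linarith

/-- Lewis–Shisha: if nondecreasing functions `fₙ` on `(a,b)` converge in the `Lᵖ` norm to a
continuous function `f`, then `fₙ → f` uniformly on every `[c,d]` with `a < c < d < b`. -/
theorem stmt4 (a b : ℝ) (hab : a < b) (p : ℝ) (hp : 1 ≤ p)
    (f : ℝ → ℝ) (hf_cont : ContinuousOn f (Set.Ioo a b))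
    (F : ℕ → ℝ → ℝ) (hF_mono : ∀ n, MonotoneOn (F n) (Set.Ioo a b))
    (hF_int : ∀ n, IntervalIntegrable (fun x => |F n x - f x| ^ p) volume a b)
    (hLp : Tendsto (fun n => ∫ x in a..b, |F n x - f x| ^ p) atTop (nhds 0)) :
    ∀ c d : ℝ, a < c → c < d → d < b →
      TendstoUniformlyOn F f atTop (Set.Icc c d) :=
  stmt4_general a b p hp f hf_cont F hF_mono hF_int hLp
end

section
/- Let f : [a,b] → ℝ be a continuous nondecreasing function and (fₙ) a sequence of nondecreasing functions on [a,b] such that for some p ≥ 1, ‖fₙ - f‖_p → 0. If additionally fₙ(a) → f(a) and fₙ(b) → f(b), then fₙ converges to f uniformly on [a,b], i.e. sup_{x ∈ [a,b]} |fₙ(x) - f(x)| → 0. -/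
/-!
Fix `ε` and choose `δ` so that `f` varies by at most `ε/2` on every `δ`-window of `[a,b]`.
If `|fₙ(x) - f(x)| ≥ ε`, say `fₙ(x) ≥ f(x) + ε`, then by monotonicity of `fₙ` the gap stays
above `ε/2` on the window to the right of `x`. Either that window fits in `[a,b]`, which forces
`‖fₙ - f‖_p ≥ (ε/2) δ^{1/p}`, or it contains `b`, which forces `|fₙ(b) - f(b)| ≥ ε/2`.
For large `n` both are excluded.
-/

open MeasureTheory Filter Set

theorem mul_sub_le_intervalIntegral_of_le_on {a b x y c : ℝ} {g : ℝ → ℝ}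
    (hax : a ≤ x) (hxy : x ≤ y) (hyb : y ≤ b) (hg_int : IntervalIntegrable g volume a b)
    (hg_nonneg : ∀ t, 0 ≤ g t) (hlow : ∀ t ∈ Icc x y, c ≤ g t) :
    c * (y - x) ≤ ∫ t in a..b, g t := by
  have hg_int' : IntervalIntegrable g volume x y :=
    hg_int.mono_set (by
      rw [uIcc_of_le hxy, uIcc_of_le (hax.trans (hxy.trans hyb))]
      exact Icc_subset_Icc hax hyb)
  calc c * (y - x) = ∫ _ in x..y, c := by simp [mul_comm]
    _ ≤ ∫ t in x..y, g t := intervalIntegral.integral_mono_on hxy intervalIntegrable_const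
        hg_int' hlow
    _ ≤ ∫ t in a..b, g t := intervalIntegral.integral_mono_interval hax hxy hyb
        (Eventually.of_forall hg_nonneg) hg_int

noncomputable def intervalLpNorm (p a b : ℝ) (h : ℝ → ℝ) : ℝ :=
  (∫ t in a..b, |h t| ^ p) ^ (1 / p)

theorem mul_rpow_le_intervalLpNorm {p a b x y c : ℝ} {h : ℝ → ℝ} (hp : 0 < p)
    (hax : a ≤ x) (hxy : x ≤ y) (hyb : y ≤ b) (hc : 0 ≤ c)
    (h_int : IntervalIntegrable (fun t => |h t| ^ p) volume a b)
    (hlow : ∀ t ∈ Icc x y, c ≤ |h t|) :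
    c * (y - x) ^ (1 / p) ≤ intervalLpNorm p a b h := by
  have hint : c ^ p * (y - x) ≤ ∫ t in a..b, |h t| ^ p :=
    mul_sub_le_intervalIntegral_of_le_on hax hxy hyb h_int (fun t => by positivity)
      fun t ht => Real.rpow_le_rpow hc (hlow t ht) hp.le
  calc c * (y - x) ^ (1 / p) = (c ^ p * (y - x)) ^ (1 / p) := by
        rw [Real.mul_rpow (by positivity) (sub_nonneg.2 hxy), ← Real.rpow_mul hc,
          mul_one_div_cancel hp.ne', Real.rpow_one]
    _ ≤ intervalLpNorm p a b h := Real.rpow_le_rpow (by positivity) hint (by positivity)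

theorem MonotoneOn.dist_lt_of_forall_window {a b δ η : ℝ} {f g : ℝ → ℝ}
    (hg : MonotoneOn g (Icc a b))
    (hf : ∀ u ∈ Icc a b, ∀ v ∈ Icc a b, dist u v ≤ δ → dist (f u) (f v) ≤ η)
    (ha : dist (g a) (f a) < η) (hb : dist (g b) (f b) < η)
    (hwin : ∀ y, a ≤ y → y + δ ≤ b → ∃ t ∈ Icc y (y + δ), dist (g t) (f t) < η) :
    ∀ x ∈ Icc a b, dist (g x) (f x) < 2 * η := by
  intro x hx
  have ⟨hax, hxb⟩ := hx
  obtain ⟨s, hs, hsx, hxs, hgs⟩ : ∃ s ∈ Icc a b, s ≤ x ∧ dist s x ≤ δ ∧ dist (g s) (f s) < η := by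
    by_cases h : a ≤ x - δ
    · obtain ⟨s, ⟨h₁, h₂⟩, hs⟩ := hwin (x - δ) h (by linarith)
      exact ⟨s, ⟨h.trans h₁, by linarith⟩, by linarith,
        abs_sub_le_iff.2 ⟨by linarith, by linarith⟩, hs⟩
    · exact ⟨a, ⟨le_rfl, hax.trans hxb⟩, hax,
        abs_sub_le_iff.2 ⟨by linarith, by linarith⟩, ha⟩
  obtain ⟨t, ht, hxt, htx, hgt⟩ : ∃ t ∈ Icc a b, x ≤ t ∧ dist t x ≤ δ ∧ dist (g t) (f t) < η := by
    by_cases h : x + δ ≤ b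
    · obtain ⟨t, ⟨h₁, h₂⟩, ht⟩ := hwin x hax h
      exact ⟨t, ⟨hax.trans h₁, h₂.trans h⟩, h₁,
        abs_sub_le_iff.2 ⟨by linarith, by linarith⟩, ht⟩
    · exact ⟨b, ⟨hax.trans hxb, le_rfl⟩, hxb,
        abs_sub_le_iff.2 ⟨by linarith, by linarith⟩, hb⟩
  -- `g s ≤ g x ≤ g t` with `g s`, `g t` within `η` of `f s`, `f t`, which are within `η` of `f x`.
  have hfs := hf s hs x hx hxs
  have hft := hf t ht x hx htx
  have hgsx := hg hs hx hsx
  have hgxt := hg hx ht hxt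
  rw [Real.dist_eq, abs_sub_lt_iff] at hgs hgt ⊢
  rw [Real.dist_eq, abs_le] at hfs hft
  constructor <;> linarith

theorem stmt5_general (a b : ℝ) (p : ℝ) (hp : 1 ≤ p)
    (f : ℝ → ℝ) (hf_cont : ContinuousOn f (Set.Icc a b))
    (F : ℕ → ℝ → ℝ) (hF_mono : ∀ n, MonotoneOn (F n) (Set.Icc a b))
    (hF_int : ∀ n, IntervalIntegrable (fun x => |F n x - f x| ^ p) volume a b)
    (hLp : Tendsto (fun n => (∫ x in a..b, |F n x - f x| ^ p) ^ (1 / p)) atTop (nhds 0))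
    (ha : Tendsto (fun n => F n a) atTop (nhds (f a)))
    (hb : Tendsto (fun n => F n b) atTop (nhds (f b))) :
    TendstoUniformlyOn F f atTop (Set.Icc a b) := by
  rw [Metric.tendstoUniformlyOn_iff]
  intro ε hε
  obtain ⟨δ, hδ, hfδ⟩ := Metric.uniformContinuousOn_iff_le.1
    (isCompact_Icc.uniformContinuousOn_of_continuous hf_cont) (ε / 2) (half_pos hε)
  have hLp_small : ∀ᶠ n in atTop,
      intervalLpNorm p a b (fun x => F n x - f x) < ε / 2 * δ ^ (1 / p) :=
    hLp.eventually_lt_const (by positivity)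
  filter_upwards [hLp_small, ha.eventually (Metric.ball_mem_nhds _ (half_pos hε)),
    hb.eventually (Metric.ball_mem_nhds _ (half_pos hε))] with n hn hna hnb x hx
  rw [dist_comm, ← mul_div_cancel₀ ε two_ne_zero]
  refine (hF_mono n).dist_lt_of_forall_window hfδ hna hnb (fun y hay hyb => ?_) x hx
  by_contra! hgap
  have := mul_rpow_le_intervalLpNorm (zero_lt_one.trans_le hp) hay (by linarith) hyb
    (half_pos hε).le (hF_int n) hgap
  rw [add_sub_cancel_left] at this
  exact this.not_gt hn

/-- (Bogachev, Lemma 4.3.) If nondecreasing `fₙ` converge to a continuous nondecreasing `f`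
in the `Lᵖ` norm on `[a,b]` and moreover `fₙ(a) → f(a)` and `fₙ(b) → f(b)`, then `fₙ → f`
uniformly on `[a,b]`. -/
theorem stmt5 (a b : ℝ) (hab : a < b) (p : ℝ) (hp : 1 ≤ p)
    (f : ℝ → ℝ) (hf_cont : ContinuousOn f (Set.Icc a b))
    (hf_mono : MonotoneOn f (Set.Icc a b))
    (F : ℕ → ℝ → ℝ) (hF_mono : ∀ n, MonotoneOn (F n) (Set.Icc a b))
    (hF_int : ∀ n, IntervalIntegrable (fun x => |F n x - f x| ^ p) volume a b)
    (hLp : Tendsto (fun n => (∫ x in a..b, |F n x - f x| ^ p) ^ (1 / p)) atTop (nhds 0))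
    (ha : Tendsto (fun n => F n a) atTop (nhds (f a)))
    (hb : Tendsto (fun n => F n b) atTop (nhds (f b))) :
    TendstoUniformlyOn F f atTop (Set.Icc a b) :=
  stmt5_general a b p hp f hf_cont F hF_mono hF_int hLp ha hb
end

section
/- Let f : [a,b] → ℝ be continuous and nondecreasing, Δₙ a partition of [a,b] with norm ‖Δₙ‖, p ∈ [1,∞), and suppose there exists a nondecreasing Δₙ-piecewise polynomial P of order m interpolating f at the knots of Δₙ. Then the best L^p approximation SI of f in the class of nondecreasing Δₙ-piecewise polynomials of order m (of a given smoothness class containing P) satisfies ‖f - SI‖_p ≤ (b-a)^{1/p} · ω_f(‖Δₙ‖). -/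
open MeasureTheory

/-- The modulus of uniform continuity of `f` on `[a,b]`. -/
noncomputable def modulus (f : ℝ → ℝ) (a b δ : ℝ) : ℝ :=
  sSup {v : ℝ | ∃ x ∈ Set.Icc a b, ∃ y ∈ Set.Icc a b, |x - y| ≤ δ ∧ v = |f x - f y|}

/-- `g` is a `Δ`-piecewise polynomial of degree `≤ m` for the partition `α 0 < ... < α k`. -/
def IsPiecewisePoly (α : ℕ → ℝ) (k m : ℕ) (g : ℝ → ℝ) : Prop :=
  ∀ i < k, ∃ q : Polynomial ℝ, q.natDegree ≤ m ∧
    ∀ x ∈ Set.Icc (α i) (α (i + 1)), g x = q.eval x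

/-!
On each cell `[α i, α (i+1)]` both `f` and `P` are nondecreasing and agree at the endpoints, so both
take values in `[f (α i), f (α (i+1))]`; hence `|f - P| ≤ f (α (i+1)) - f (α i) ≤ ω_f(‖Δ‖)` on
`[a,b]`. Integrating gives `‖f - P‖ₚ ≤ (b-a)^(1/p) ω_f(‖Δ‖)`, and `SI` is at least as good as `P`.
-/

open Set

theorem MonotoneOn.abs_sub_le_modulus {f : ℝ → ℝ} {a b δ x y : ℝ}
    (hf : MonotoneOn f (Icc a b)) (hx : x ∈ Icc a b) (hy : y ∈ Icc a b) (hxy : |x - y| ≤ δ) :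
    |f x - f y| ≤ modulus f a b δ := by
  have hab : a ≤ b := hx.1.trans hx.2
  have ha := left_mem_Icc.2 hab
  have hb := right_mem_Icc.2 hab
  refine le_csSup ⟨f b - f a, ?_⟩ ⟨x, hx, y, hy, hxy, rfl⟩
  rintro v ⟨x, hx, y, hy, -, rfl⟩
  exact abs_sub_le_iff.2 ⟨sub_le_sub (hf hx hb hx.2) (hf ha hy hy.1),
    sub_le_sub (hf hy hb hy.2) (hf ha hx hx.1)⟩

theorem abs_sub_le_of_monotoneOn_of_eqOn_endpoints {f g : ℝ → ℝ} {u v x : ℝ}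
    (hf : MonotoneOn f (Icc u v)) (hg : MonotoneOn g (Icc u v))
    (hu : g u = f u) (hv : g v = f v) (hx : x ∈ Icc u v) :
    |f x - g x| ≤ f v - f u := by
  have huv : u ≤ v := hx.1.trans hx.2
  have hu' := left_mem_Icc.2 huv
  have hv' := right_mem_Icc.2 huv
  exact abs_sub_le_iff.2 ⟨sub_le_sub (hf hx hv' hx.2) (hu ▸ hg hu' hx hx.1),
    sub_le_sub (hv ▸ hg hx hv' hx.2) (hf hu' hx hx.1)⟩

theorem exists_lt_mem_Icc_of_mem_Icc {α : ℕ → ℝ} {x : ℝ} :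
    ∀ {k : ℕ}, 0 < k → x ∈ Icc (α 0) (α k) → ∃ i < k, x ∈ Icc (α i) (α (i + 1))
  | 1, _, hx => ⟨0, zero_lt_one, hx⟩
  | n + 2, _, hx => by
    by_cases hxn : x ≤ α (n + 1)
    · obtain ⟨i, hi, hxi⟩ := exists_lt_mem_Icc_of_mem_Icc n.succ_pos ⟨hx.1, hxn⟩
      exact ⟨i, hi.trans n.succ.lt_succ_self, hxi⟩
    · exact ⟨n + 1, (n + 1).lt_succ_self, (not_le.1 hxn).le, hx.2⟩

theorem abs_sub_le_modulus_of_monotoneOn_of_interpolates {f P : ℝ → ℝ} {α : ℕ → ℝ} {k : ℕ}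
    {δ : ℝ} (hk : 0 < k) (hα : ∀ i < k, α i < α (i + 1)) (hδ : ∀ i < k, α (i + 1) - α i ≤ δ)
    (hf : MonotoneOn f (Icc (α 0) (α k))) (hP : MonotoneOn P (Icc (α 0) (α k)))
    (hPf : ∀ i ≤ k, P (α i) = f (α i)) {x : ℝ} (hx : x ∈ Icc (α 0) (α k)) :
    |f x - P x| ≤ modulus f (α 0) (α k) δ := by
  have hα_mono : MonotoneOn α (Iic k) := (strictMonoOn_Iic_of_lt_succ hα).monotoneOn
  obtain ⟨i, hi, hxi⟩ := exists_lt_mem_Icc_of_mem_Icc hk hx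
  have hcell : Icc (α i) (α (i + 1)) ⊆ Icc (α 0) (α k) :=
    Icc_subset_Icc (hα_mono (Nat.zero_le k) hi.le (Nat.zero_le i))
      (hα_mono (show i + 1 ≤ k from hi) (le_refl k) hi)
  have hle : α i ≤ α (i + 1) := (hα i hi).le
  calc |f x - P x| ≤ f (α (i + 1)) - f (α i) :=
        abs_sub_le_of_monotoneOn_of_eqOn_endpoints (hf.mono hcell) (hP.mono hcell)
          (hPf i hi.le) (hPf (i + 1) hi) hxi
    _ ≤ |f (α (i + 1)) - f (α i)| := le_abs_self _
    _ ≤ modulus f (α 0) (α k) δ := hf.abs_sub_le_modulus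
        (hcell (right_mem_Icc.2 hle)) (hcell (left_mem_Icc.2 hle))
        (by rw [abs_of_nonneg (sub_nonneg.2 hle)]; exact hδ i hi)

theorem intervalIntegral_abs_rpow_rpow_one_div_le {g : ℝ → ℝ} {a b p C : ℝ} (hab : a ≤ b)
    (hp : 0 < p) (hg : ∀ x ∈ Icc a b, |g x| ≤ C) :
    (∫ x in a..b, |g x| ^ p) ^ (1 / p) ≤ (b - a) ^ (1 / p) * C := by
  have hC : 0 ≤ C := (abs_nonneg _).trans (hg a ⟨le_rfl, hab⟩)
  have hint : ∫ x in a..b, |g x| ^ p ≤ (b - a) * C ^ p := by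
    by_cases hgi : IntervalIntegrable (fun x => |g x| ^ p) volume a b
    · simpa [mul_comm] using intervalIntegral.integral_mono_on hab hgi
        intervalIntegrable_const fun x hx => Real.rpow_le_rpow (abs_nonneg _) (hg x hx) hp.le
    · rw [intervalIntegral.integral_undef hgi]
      exact mul_nonneg (sub_nonneg.2 hab) (Real.rpow_nonneg hC p)
  calc (∫ x in a..b, |g x| ^ p) ^ (1 / p)
      ≤ ((b - a) * C ^ p) ^ (1 / p) :=
        Real.rpow_le_rpow (intervalIntegral.integral_nonneg hab fun x _ =>
          Real.rpow_nonneg (abs_nonneg _) p) hint (by positivity)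
    _ = (b - a) ^ (1 / p) * C := by
        rw [Real.mul_rpow (sub_nonneg.2 hab) (Real.rpow_nonneg hC p), ← Real.rpow_mul hC,
          mul_one_div_cancel hp.ne', Real.rpow_one]

theorem stmt8_general (a b : ℝ) (hab : a < b) (p : ℝ) (hp : 1 ≤ p)
    (f : ℝ → ℝ)
    (hf_mono : MonotoneOn f (Set.Icc a b))
    (k : ℕ) (α : ℕ → ℝ) (hα0 : α 0 = a) (hαk : α k = b)
    (hαinc : ∀ i < k, α i < α (i + 1))
    (normΔ : ℝ) (hnorm : ∀ i < k, α (i + 1) - α i ≤ normΔ)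
    (S : Set (ℝ → ℝ))
    (P : ℝ → ℝ) (hPS : P ∈ S) (hP_mono : MonotoneOn P (Set.Icc a b))
    (hP_interp : ∀ i ≤ k, P (α i) = f (α i))
    (SI : ℝ → ℝ)
    (hbest : ∀ g ∈ S, (∫ x in a..b, |f x - SI x| ^ p) ^ (1 / p) ≤
      (∫ x in a..b, |f x - g x| ^ p) ^ (1 / p)) :
    (∫ x in a..b, |f x - SI x| ^ p) ^ (1 / p) ≤ (b - a) ^ (1 / p) * modulus f a b normΔ := by
  subst hα0 hαk
  have hk : 0 < k := Nat.pos_of_ne_zero fun h => by subst h; exact lt_irrefl _ hab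
  calc (∫ x in α 0..α k, |f x - SI x| ^ p) ^ (1 / p)
      ≤ (∫ x in α 0..α k, |f x - P x| ^ p) ^ (1 / p) := hbest P hPS
    _ ≤ (α k - α 0) ^ (1 / p) * modulus f (α 0) (α k) normΔ :=
        intervalIntegral_abs_rpow_rpow_one_div_le hab.le (by linarith) fun _ =>
          abs_sub_le_modulus_of_monotoneOn_of_interpolates hk hαinc hnorm hf_mono hP_mono hP_interp

/-- If the approximating class `S` (e.g. nondecreasing `Δ`-piecewise polynomials of degree `≤ m`
in a given smoothness class) contains a nondecreasing piecewise polynomial `P` interpolating the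
continuous nondecreasing `f` at the knots, then the best `Lᵖ` approximation `SI` of `f` in `S`
satisfies `‖f - SI‖ₚ ≤ (b-a)^(1/p) · ω_f(‖Δₙ‖)`. -/
theorem stmt8 (a b : ℝ) (hab : a < b) (p : ℝ) (hp : 1 ≤ p)
    (f : ℝ → ℝ) (hf_cont : ContinuousOn f (Set.Icc a b))
    (hf_mono : MonotoneOn f (Set.Icc a b))
    (k : ℕ) (hk : 1 ≤ k) (α : ℕ → ℝ) (hα0 : α 0 = a) (hαk : α k = b)
    (hαinc : ∀ i < k, α i < α (i + 1))
    (normΔ : ℝ) (hnorm : ∀ i < k, α (i + 1) - α i ≤ normΔ)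
    (m : ℕ) (S : Set (ℝ → ℝ))
    (P : ℝ → ℝ) (hPS : P ∈ S) (hP_mono : MonotoneOn P (Set.Icc a b))
    (hP_pp : IsPiecewisePoly α k m P)
    (hP_interp : ∀ i ≤ k, P (α i) = f (α i))
    (SI : ℝ → ℝ) (hSIS : SI ∈ S)
    (hbest : ∀ g ∈ S, (∫ x in a..b, |f x - SI x| ^ p) ^ (1 / p) ≤
      (∫ x in a..b, |f x - g x| ^ p) ^ (1 / p)) :
    (∫ x in a..b, |f x - SI x| ^ p) ^ (1 / p) ≤ (b - a) ^ (1 / p) * modulus f a b normΔ :=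
  stmt8_general a b hab p hp f hf_mono k α hα0 hαk hαinc normΔ hnorm S P hPS hP_mono hP_interp SI
    hbest
end

section
/- Let f : [a,b] → ℝ be continuous and nondecreasing, (Δₙ) a sequence of partitions of [a,b] with ‖Δₙ‖ → 0, l ≥ 0, m ≥ 2l+1, and p ∈ [1,∞). Then the sequence of best L^p approximations SIₙ of f in the cone of nondecreasing Δₙ-piecewise polynomials of degree ≤ m in C^l[a,b] converges uniformly to f on every compact interval [c,d] with a < c < d < b. -/
/-!
Uniform continuity of `f` makes its increments over the cells of `Δₙ` eventually small. Blending
the values of `f` at the knots with a monotone `C^l` smoothstep that is a polynomial of degree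
`2l+1` on `[0,1]` (the normalised primitive of `(s(1-s))^l`) gives an element of the cone which is
uniformly that close to `f`, so the best approximations satisfy `∫ |f - SIₙ|^p → 0`.
Monotonicity upgrades this to local uniform convergence (Lewis–Shisha): if `SIₙ x ≥ f x + 2ε`
and `f` varies by at most `ε` on `[x, x + δ]`, then `SIₙ ≥ f + ε` there, which costs `δ εᵖ` of the
integral; symmetrically on `[x - δ, x]`.
-/

open MeasureTheory Filter

/-- The cone of nondecreasing `Δ`-piecewise polynomials of degree `≤ m` of class `C^l` on
`[a,b]`, for the partition `α 0 < α 1 < ... < α k`. -/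
def SIcone (a b : ℝ) (α : ℕ → ℝ) (k m l : ℕ) : Set (ℝ → ℝ) :=
  {g | MonotoneOn g (Set.Icc a b) ∧ ContDiffOn ℝ (l : ℕ∞) g (Set.Icc a b) ∧
    ∀ i < k, ∃ q : Polynomial ℝ, q.natDegree ≤ m ∧
      ∀ x ∈ Set.Icc (α i) (α (i + 1)), g x = q.eval x}

open Polynomial Set Topology

lemma contDiff_succ_of_hasDerivAt {F F' : ℝ → ℝ} {n : ℕ} (hF : ∀ t, HasDerivAt F (F' t) t)
    (hF' : ContDiff ℝ n F') : ContDiff ℝ (n + 1) F := by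
  have hderiv : deriv F = F' := funext fun t => (hF t).deriv
  rw [contDiff_succ_iff_deriv, hderiv]
  exact ⟨fun t => (hF t).differentiableAt, by simp, hF'⟩

lemma hasDerivAt_max_zero_pow {j : ℕ} (hj : j ≠ 0) (t : ℝ) :
    HasDerivAt (fun s : ℝ => max s 0 ^ (j + 1)) ((j + 1) * max t 0 ^ j) t := by
  refine hasDerivAt_of_hasDerivAt_of_ne' (x := 0) (fun y hy => ?_)
    (by fun_prop : Continuous fun s : ℝ => max s 0 ^ (j + 1)).continuousAt
    (by fun_prop : Continuous fun s : ℝ => (j + 1) * max s 0 ^ j).continuousAt t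
  rcases hy.lt_or_gt with hy | hy
  · have hzero : (fun _ : ℝ => (0 : ℝ)) =ᶠ[𝓝 y] fun s => max s 0 ^ (j + 1) := by
      filter_upwards [eventually_lt_nhds hy] with s hs
      rw [max_eq_right hs.le, zero_pow (Nat.succ_ne_zero j)]
    rw [max_eq_right hy.le, zero_pow hj, mul_zero]
    exact (hasDerivAt_const y 0).congr_of_eventuallyEq hzero.symm
  · have hpow : (fun s : ℝ => s ^ (j + 1)) =ᶠ[𝓝 y] fun s => max s 0 ^ (j + 1) := by
      filter_upwards [eventually_gt_nhds hy] with s hs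
      rw [max_eq_left hs.le]
    rw [max_eq_left hy.le]
    exact ((hasDerivAt_pow (j + 1) y).congr_of_eventuallyEq hpow.symm).congr_deriv
      (by push_cast; ring)

lemma contDiff_max_zero_pow (j : ℕ) : ContDiff ℝ j (fun s : ℝ => max s 0 ^ (j + 1)) := by
  induction j with
  | zero => simpa using continuous_id.max continuous_const
  | succ j ih =>
    exact_mod_cast contDiff_succ_of_hasDerivAt (hasDerivAt_max_zero_pow j.succ_ne_zero)
      (contDiff_const.mul (by exact_mod_cast ih))

theorem Polynomial.exists_derivative_eq {R : Type*} [Field R] [CharZero R] (P : R[X]) :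
    ∃ Q : R[X], derivative Q = P ∧ Q.natDegree ≤ P.natDegree + 1 := by
  refine ⟨∑ i ∈ P.support, C (P.coeff i / (i + 1)) * X ^ (i + 1), ?_, ?_⟩
  · rw [map_sum]
    conv_rhs => rw [P.as_sum_support_C_mul_X_pow]
    refine Finset.sum_congr rfl fun i _ => ?_
    rw [derivative_C_mul_X_pow, Nat.add_sub_cancel]
    push_cast
    rw [div_mul_cancel₀ _ (Nat.cast_add_one_ne_zero i)]
  · refine natDegree_sum_le_of_forall_le _ _ fun i hi => ?_
    exact (natDegree_C_mul_X_pow_le _ _).trans (by simpa using le_natDegree_of_mem_supp i hi)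

theorem exists_smoothstep_of_bump {ρ : ℝ → ℝ} {j : ℕ} (hρ : ContDiff ℝ j ρ)
    (hρ_pos : ∀ s ∈ Ioo (0 : ℝ) 1, 0 < ρ s) (hρ_zero : ∀ s ∉ Ioo (0 : ℝ) 1, ρ s = 0)
    {P : ℝ[X]} (hP : EqOn ρ P.eval (Icc 0 1)) :
    ∃ φ : ℝ → ℝ, ContDiff ℝ (j + 1) φ ∧ Monotone φ ∧ EqOn φ 0 (Iic 0) ∧ EqOn φ 1 (Ici 1) ∧
      ∃ Q : ℝ[X], Q.natDegree ≤ P.natDegree + 1 ∧ EqOn φ Q.eval (Icc 0 1) := by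
  have hρ_nonneg : ∀ s, 0 ≤ ρ s := fun s => by
    by_cases hs : s ∈ Ioo (0 : ℝ) 1
    exacts [(hρ_pos s hs).le, (hρ_zero s hs).ge]
  set F : ℝ → ℝ := fun t => ∫ s in (0 : ℝ)..t, ρ s
  have hF : ∀ t, HasDerivAt F (ρ t) t := fun t =>
    (hρ.continuous.integral_hasStrictDerivAt 0 t).hasDerivAt
  have hF_const : ∀ u t, (∀ s ∈ uIcc u t, ρ s = 0) → F t = F u := fun u t h => by
    change ∫ s in (0 : ℝ)..t, ρ s = ∫ s in (0 : ℝ)..u, ρ s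
    rw [← intervalIntegral.integral_add_adjacent_intervals (b := u)
      (hρ.continuous.intervalIntegrable 0 u) (hρ.continuous.intervalIntegrable u t),
      intervalIntegral.integral_congr (g := fun _ => 0) h, intervalIntegral.integral_zero, add_zero]
  have hB : 0 < F 1 := intervalIntegral.intervalIntegral_pos_of_pos_on
    (hρ.continuous.intervalIntegrable 0 1) hρ_pos one_pos
  obtain ⟨Q, hQ, hQ_deg⟩ := P.exists_derivative_eq
  refine ⟨fun t => F t / F 1, (contDiff_succ_of_hasDerivAt hF hρ).div_const _,
    (monotone_of_deriv_nonneg (fun t => (hF t).differentiableAt)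
      fun t => (hF t).deriv ▸ hρ_nonneg t).div_const hB.le, fun t ht => ?_, fun t ht => ?_,
    C (F 1)⁻¹ * (Q - C (Q.eval 0)), ?_, fun t ht => ?_⟩
  · have : F t = F 0 := hF_const 0 t fun s hs => hρ_zero s fun h => by
      rw [uIcc_of_ge ht] at hs; linarith [hs.2, h.1]
    simp [this, F]
  · have : F t = F 1 := hF_const 1 t fun s hs => hρ_zero s fun h => by
      rw [uIcc_of_le ht] at hs; linarith [hs.1, h.2]
    simp [this, hB.ne']
  · refine (natDegree_C_mul_le _ _).trans ((natDegree_sub_le _ _).trans ?_)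
    simpa using hQ_deg
  · have hFt : F t = Q.eval t - Q.eval 0 := by
      have hsub : uIcc 0 t ⊆ Icc 0 1 := by rw [uIcc_of_le ht.1]; exact Icc_subset_Icc le_rfl ht.2
      change ∫ s in (0 : ℝ)..t, ρ s = _
      rw [intervalIntegral.integral_congr (hP.mono hsub),
        intervalIntegral.integral_eq_sub_of_hasDerivAt (fun s _ => hQ ▸ Q.hasDerivAt s)
          (P.continuous.intervalIntegrable 0 t)]
    simp [hFt, div_eq_inv_mul]

theorem exists_smoothstep (l : ℕ) :
    ∃ φ : ℝ → ℝ, ContDiff ℝ l φ ∧ Monotone φ ∧ EqOn φ 0 (Iic 0) ∧ EqOn φ 1 (Ici 1) ∧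
      ∃ Q : ℝ[X], Q.natDegree ≤ 2 * l + 1 ∧ EqOn φ Q.eval (Icc 0 1) := by
  cases l with
  | zero =>
    refine ⟨fun t => min (max t 0) 1, by simpa using by fun_prop,
      (monotone_id.max monotone_const).min monotone_const, fun t ht => ?_, fun t ht => ?_,
      X, by simp, fun t ht => ?_⟩
    · simp [max_eq_right (mem_Iic.1 ht)]
    · simp [max_eq_left (zero_le_one.trans (mem_Ici.1 ht)), mem_Ici.1 ht]
    · simp [max_eq_left ht.1, ht.2]
  | succ j =>
    set ρ : ℝ → ℝ := fun s => max (s * (1 - s)) 0 ^ (j + 1)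
    have hρ_pos : ∀ s ∈ Ioo (0 : ℝ) 1, 0 < ρ s := fun s hs =>
      pow_pos (lt_max_of_lt_left (mul_pos hs.1 (sub_pos.2 hs.2))) _
    have hρ_zero : ∀ s ∉ Ioo (0 : ℝ) 1, ρ s = 0 := fun s hs => by
      have : s * (1 - s) ≤ 0 := by
        rw [mem_Ioo, not_and_or, not_lt, not_lt] at hs
        rcases hs with h | h <;> nlinarith
      simp [ρ, max_eq_right this]
    have hP : EqOn ρ (eval · ((X * (1 - X)) ^ (j + 1) : ℝ[X])) (Icc 0 1) := fun s hs => by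
      simp [ρ, max_eq_left (mul_nonneg hs.1 (sub_nonneg.2 hs.2))]
    have hP_deg : ((X * (1 - X)) ^ (j + 1) : ℝ[X]).natDegree ≤ 2 * (j + 1) := by
      compute_degree; omega
    obtain ⟨φ, hφ, hφ_mono, hφ0, hφ1, Q, hQ_deg, hQ⟩ := exists_smoothstep_of_bump
      ((contDiff_max_zero_pow j).comp (by fun_prop)) hρ_pos hρ_zero hP
    exact ⟨φ, by exact_mod_cast hφ, hφ_mono, hφ0, hφ1, Q, by omega, hQ⟩

section Partition

variable {α : ℕ → ℝ} {k : ℕ}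

lemma exists_lt_mem_Icc_succ {x : ℝ} :
    ∀ {k : ℕ}, 0 < k → x ∈ Icc (α 0) (α k) → ∃ i < k, x ∈ Icc (α i) (α (i + 1))
  | k + 1, _, hx => by
    by_cases h : 0 < k ∧ x ≤ α k
    · obtain ⟨i, hi, hxi⟩ := exists_lt_mem_Icc_succ h.1 ⟨hx.1, h.2⟩
      exact ⟨i, by omega, hxi⟩
    · refine ⟨k, by omega, ?_, hx.2⟩
      rcases Nat.eq_zero_or_pos k with rfl | hk
      · exact hx.1
      · exact (not_le.1 fun h' => h ⟨hk, h'⟩).le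

lemma StrictMonoOn.lt_add_one_of_lt (hα : StrictMonoOn α (Iic k)) {i : ℕ} (hi : i < k) :
    α i < α (i + 1) :=
  hα (mem_Iic.2 hi.le) (mem_Iic.2 hi) (Nat.lt_succ_self i)

lemma sub_div_sub_mem_Icc_zero_one {u v x : ℝ} (huv : u < v) (hx : x ∈ Icc u v) :
    (x - u) / (v - u) ∈ Icc (0 : ℝ) 1 :=
  ⟨div_nonneg (sub_nonneg.2 hx.1) (sub_pos.2 huv).le,
    (div_le_one (sub_pos.2 huv)).2 (sub_le_sub_right hx.2 _)⟩

lemma MonotoneOn.mem_Icc_zero_of_le (hα : MonotoneOn α (Iic k)) {i : ℕ} (hi : i ≤ k) :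
    α i ∈ Icc (α 0) (α k) :=
  ⟨hα (mem_Iic.2 (Nat.zero_le k)) hi (Nat.zero_le i), hα hi (mem_Iic.2 le_rfl) hi⟩

end Partition

noncomputable def smoothstepInterp (φ f : ℝ → ℝ) (α : ℕ → ℝ) (k : ℕ) (x : ℝ) : ℝ :=
  f (α 0) + ∑ i ∈ Finset.range k, (f (α (i + 1)) - f (α i)) * φ ((x - α i) / (α (i + 1) - α i))

section Interpolation

variable {φ f : ℝ → ℝ} {α : ℕ → ℝ} {k : ℕ}

lemma smoothstepInterp_eq_of_mem_Icc (hφ0 : EqOn φ 0 (Iic 0)) (hφ1 : EqOn φ 1 (Ici 1))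
    (hα : StrictMonoOn α (Iic k)) {i : ℕ} (hi : i < k) {x : ℝ} (hx : x ∈ Icc (α i) (α (i + 1))) :
    smoothstepInterp φ f α k x =
      f (α i) + (f (α (i + 1)) - f (α i)) * φ ((x - α i) / (α (i + 1) - α i)) := by
  obtain ⟨r, rfl⟩ := Nat.exists_eq_add_of_lt hi
  have hle : ∀ {j j'}, j ≤ j' → j' ≤ i + r + 1 → α j ≤ α j' := fun h h' =>
    hα.monotoneOn (mem_Iic.2 (h.trans h')) (mem_Iic.2 h') h
  have hlen : ∀ j < i + r + 1, 0 < α (j + 1) - α j := fun j hj =>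
    sub_pos.2 (hα.lt_add_one_of_lt hj)
  have hbefore : ∀ j ∈ Finset.range i, (f (α (j + 1)) - f (α j)) *
      φ ((x - α j) / (α (j + 1) - α j)) = f (α (j + 1)) - f (α j) := fun j hj => by
    have hj := Finset.mem_range.1 hj
    rw [hφ1 ((le_div_iff₀ (hlen j (by omega))).2 (by linarith [hle hj hi.le, hx.1])),
      Pi.one_apply, mul_one]
  have hafter : ∀ j ∈ Finset.range r, (f (α (i + 1 + j + 1)) - f (α (i + 1 + j))) *
      φ ((x - α (i + 1 + j)) / (α (i + 1 + j + 1) - α (i + 1 + j))) = 0 := fun j hj => by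
    have hj := Finset.mem_range.1 hj
    have hxj : x ≤ α (i + 1 + j) := hx.2.trans (hle (Nat.le_add_right _ _) (by omega))
    rw [hφ0 (div_nonpos_of_nonpos_of_nonneg (sub_nonpos.2 hxj) (hlen _ (by omega)).le),
      Pi.zero_apply, mul_zero]
  rw [smoothstepInterp, show i + r + 1 = i + 1 + r by omega, Finset.sum_range_add,
    Finset.sum_range_succ, Finset.sum_congr rfl hbefore, Finset.sum_range_sub (fun j => f (α j)),
    Finset.sum_eq_zero hafter]
  ring

lemma smoothstepInterp_monotone (hφ : Monotone φ) (hα : StrictMonoOn α (Iic k))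
    (hf : MonotoneOn f (Icc (α 0) (α k))) : Monotone (smoothstepInterp φ f α k) := by
  intro x y hxy
  refine add_le_add_right (Finset.sum_le_sum fun i hi => ?_) _
  have hi : i < k := Finset.mem_range.1 hi
  have hlen : α i < α (i + 1) := hα.lt_add_one_of_lt hi
  refine mul_le_mul_of_nonneg_left (hφ ?_) (sub_nonneg.2 ?_)
  · exact div_le_div_of_nonneg_right (sub_le_sub_right hxy _) (sub_pos.2 hlen).le
  · exact hf (hα.monotoneOn.mem_Icc_zero_of_le hi.le) (hα.monotoneOn.mem_Icc_zero_of_le hi)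
      hlen.le

lemma smoothstepInterp_mem_SIcone {l m : ℕ} (hφ : ContDiff ℝ l φ) (hφ_mono : Monotone φ)
    (hφ0 : EqOn φ 0 (Iic 0)) (hφ1 : EqOn φ 1 (Ici 1)) {Q : ℝ[X]} (hQ_deg : Q.natDegree ≤ m)
    (hQ : EqOn φ Q.eval (Icc 0 1)) (hα : StrictMonoOn α (Iic k))
    (hf : MonotoneOn f (Icc (α 0) (α k))) :
    smoothstepInterp φ f α k ∈ SIcone (α 0) (α k) α k m l := by
  refine ⟨(smoothstepInterp_monotone hφ_mono hα hf).monotoneOn _, ?_, fun i hi => ?_⟩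
  · exact (contDiff_const.add (ContDiff.sum fun i _ => contDiff_const.mul
      (hφ.comp ((contDiff_id.sub contDiff_const).div_const _)))).contDiffOn
  refine ⟨C (f (α i)) + C (f (α (i + 1)) - f (α i)) *
    Q.comp (C (α (i + 1) - α i)⁻¹ * (X - C (α i))), ?_, fun x hx => ?_⟩
  · have h_lin : (C (α (i + 1) - α i)⁻¹ * (X - C (α i))).natDegree ≤ 1 :=
      (natDegree_C_mul_le _ _).trans (natDegree_X_sub_C_le _)
    refine (natDegree_add_le _ _).trans (max_le (by simp) ((natDegree_C_mul_le _ _).trans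
      (natDegree_comp_le.trans ((Nat.mul_le_mul hQ_deg h_lin).trans (mul_one m).le))))
  · rw [smoothstepInterp_eq_of_mem_Icc hφ0 hφ1 hα hi hx,
      hQ (sub_div_sub_mem_Icc_zero_one (hα.lt_add_one_of_lt hi) hx)]
    simp [div_eq_inv_mul]

lemma abs_sub_smoothstepInterp_le (hφ_mono : Monotone φ) (hφ0 : EqOn φ 0 (Iic 0))
    (hφ1 : EqOn φ 1 (Ici 1)) (hα : StrictMonoOn α (Iic k)) (hf : MonotoneOn f (Icc (α 0) (α k)))
    (hk : 0 < k) {ε : ℝ} (hosc : ∀ i < k, f (α (i + 1)) - f (α i) ≤ ε) {x : ℝ}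
    (hx : x ∈ Icc (α 0) (α k)) : |f x - smoothstepInterp φ f α k x| ≤ ε := by
  obtain ⟨i, hi, hxi⟩ := exists_lt_mem_Icc_succ hk hx
  set t := (x - α i) / (α (i + 1) - α i)
  have hφt : φ t ∈ Icc 0 1 := by
    have ht := sub_div_sub_mem_Icc_zero_one (hα.lt_add_one_of_lt hi) hxi
    exact ⟨(hφ0 (mem_Iic.2 le_rfl)).symm.trans_le (hφ_mono ht.1),
      (hφ_mono ht.2).trans_eq (hφ1 (mem_Ici.2 le_rfl))⟩
  have hfx : f x ∈ Icc (f (α i)) (f (α (i + 1))) :=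
    ⟨hf (hα.monotoneOn.mem_Icc_zero_of_le hi.le) hx hxi.1,
      hf hx (hα.monotoneOn.mem_Icc_zero_of_le hi) hxi.2⟩
  have hΔ : 0 ≤ f (α (i + 1)) - f (α i) := sub_nonneg.2 (hfx.1.trans hfx.2)
  rw [smoothstepInterp_eq_of_mem_Icc hφ0 hφ1 hα hi hxi]
  refine (abs_sub_le_of_le_of_le hfx.1 hfx.2 ?_ ?_).trans (hosc i hi)
  · nlinarith [hφt.1]
  · nlinarith [hφt.2]

theorem exists_mem_SIcone_abs_sub_le {l m : ℕ} (hm : 2 * l + 1 ≤ m) (hα : StrictMonoOn α (Iic k))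
    (hf : MonotoneOn f (Icc (α 0) (α k))) (hk : 0 < k) {ε : ℝ}
    (hosc : ∀ i < k, f (α (i + 1)) - f (α i) ≤ ε) :
    ∃ g ∈ SIcone (α 0) (α k) α k m l, ∀ x ∈ Icc (α 0) (α k), |f x - g x| ≤ ε := by
  obtain ⟨φ, hφ, hφ_mono, hφ0, hφ1, Q, hQ_deg, hQ⟩ := exists_smoothstep l
  exact ⟨smoothstepInterp φ f α k,
    smoothstepInterp_mem_SIcone hφ hφ_mono hφ0 hφ1 (hQ_deg.trans hm) hQ hα hf,
    fun x hx => abs_sub_smoothstepInterp_le hφ_mono hφ0 hφ1 hα hf hk hosc hx⟩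

end Interpolation

lemma integral_rpow_abs_sub_le_of_rpow_le {f F g : ℝ → ℝ} {a b p ε : ℝ} (hp : 0 < p) (hab : a ≤ b)
    (hbest : (∫ x in a..b, |f x - F x| ^ p) ^ (1 / p) ≤ (∫ x in a..b, |f x - g x| ^ p) ^ (1 / p))
    (herr : ∀ x ∈ Icc a b, |f x - g x| ≤ ε) :
    ∫ x in a..b, |f x - F x| ^ p ≤ ε ^ p * (b - a) := by
  have hnonneg : ∀ u : ℝ → ℝ, 0 ≤ ∫ x in a..b, |f x - u x| ^ p := fun u =>
    intervalIntegral.integral_nonneg hab fun x _ => by positivity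
  refine ((Real.rpow_le_rpow_iff (hnonneg F) (hnonneg g) (by positivity)).1 hbest).trans
    ((le_abs_self _).trans ?_)
  have hbound := intervalIntegral.norm_integral_le_of_norm_le_const
    (f := fun x => |f x - g x| ^ p) (C := ε ^ p) fun x hx => by
      rw [uIoc_of_le hab] at hx
      rw [Real.norm_eq_abs, abs_of_nonneg (by positivity)]
      exact Real.rpow_le_rpow (abs_nonneg _) (herr x (Ioc_subset_Icc_self hx)) hp.le
  rwa [abs_of_nonneg (sub_nonneg.2 hab)] at hbound

lemma eventually_forall_sub_le_of_tendsto_mesh {ι : Type*} {ℓ : Filter ι} {f : ℝ → ℝ} {a b : ℝ}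
    (hf : UniformContinuousOn f (Icc a b)) {k : ι → ℕ} {α : ι → ℕ → ℝ}
    (hα0 : ∀ n, α n 0 = a) (hαk : ∀ n, α n (k n) = b) (hα : ∀ n, StrictMonoOn (α n) (Iic (k n)))
    {d : ι → ℝ} (hd : ∀ n, ∀ i < k n, α n (i + 1) - α n i ≤ d n) (hmesh : Tendsto d ℓ (𝓝 0))
    {ε : ℝ} (hε : 0 < ε) : ∀ᶠ n in ℓ, ∀ i < k n, f (α n (i + 1)) - f (α n i) ≤ ε := by
  obtain ⟨δ, hδ, hfδ⟩ := Metric.uniformContinuousOn_iff.1 hf ε hε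
  filter_upwards [hmesh.eventually (gt_mem_nhds hδ)] with n hn i hi
  have hmem : ∀ j ≤ k n, α n j ∈ Icc a b := fun j hj => by
    simpa [hα0 n, hαk n] using (hα n).monotoneOn.mem_Icc_zero_of_le hj
  have hdist := hfδ _ (hmem (i + 1) hi) _ (hmem i hi.le) (by
    rw [Real.dist_eq, abs_of_pos (sub_pos.2 ((hα n).lt_add_one_of_lt hi))]
    exact (hd n i hi).trans_lt hn)
  exact (le_abs_self _).trans (Real.dist_eq _ _ ▸ hdist).le

theorem tendsto_integral_rpow_abs_sub_of_best_SIcone {ι : Type*} {ℓ : Filter ι} {a b p : ℝ}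
    (hab : a ≤ b) (hp : 0 < p) {f : ℝ → ℝ} (hf_cont : ContinuousOn f (Icc a b))
    (hf_mono : MonotoneOn f (Icc a b)) {l m : ℕ} (hm : 2 * l + 1 ≤ m) {k : ι → ℕ}
    (hk : ∀ n, 0 < k n) {α : ι → ℕ → ℝ} (hα0 : ∀ n, α n 0 = a) (hαk : ∀ n, α n (k n) = b)
    (hα : ∀ n, StrictMonoOn (α n) (Iic (k n))) {d : ι → ℝ}
    (hd : ∀ n, ∀ i < k n, α n (i + 1) - α n i ≤ d n) (hmesh : Tendsto d ℓ (𝓝 0))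
    {SI : ι → ℝ → ℝ} (hSI_best : ∀ n, ∀ g ∈ SIcone a b (α n) (k n) m l,
      (∫ x in a..b, |f x - SI n x| ^ p) ^ (1 / p) ≤ (∫ x in a..b, |f x - g x| ^ p) ^ (1 / p)) :
    Tendsto (fun n => ∫ x in a..b, |f x - SI n x| ^ p) ℓ (𝓝 0) := by
  have hbound : ∀ ε > 0, ∀ᶠ n in ℓ, ∫ x in a..b, |f x - SI n x| ^ p ≤ ε ^ p * (b - a) :=
    fun ε hε => (eventually_forall_sub_le_of_tendsto_mesh
      (isCompact_Icc.uniformContinuousOn_of_continuous hf_cont) hα0 hαk hα hd hmesh hε).mono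
      fun n hosc => by
        obtain ⟨g, hg, herr⟩ := exists_mem_SIcone_abs_sub_le hm (hα n)
          (by rwa [hα0 n, hαk n]) (hk n) hosc
        rw [hα0 n, hαk n] at hg herr
        exact integral_rpow_abs_sub_le_of_rpow_le hp hab (hSI_best n g hg) herr
  have hsmall : Tendsto (fun ε : ℝ => ε ^ p * (b - a)) (𝓝[>] 0) (𝓝 0) := by
    have hcont : Continuous fun ε : ℝ => ε ^ p * (b - a) :=
      (Real.continuous_rpow_const hp.le).mul continuous_const
    simpa [Real.zero_rpow hp.ne'] using (hcont.tendsto 0).mono_left nhdsWithin_le_nhds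
  refine tendsto_order.2 ⟨fun T hT => Eventually.of_forall fun n =>
    hT.trans_le (intervalIntegral.integral_nonneg hab fun x _ => by positivity), fun T hT => ?_⟩
  obtain ⟨ε, hεT, hε⟩ := ((hsmall.eventually (gt_mem_nhds hT)).and self_mem_nhdsWithin).exists
  exact (hbound ε hε).mono fun n hn => hn.trans_lt hεT

lemma mul_le_integral_of_le_on_Icc {h : ℝ → ℝ} {a b u v c : ℝ} (hau : a ≤ u) (huv : u ≤ v)
    (hvb : v ≤ b) (hint : IntervalIntegrable h volume a b) (hnonneg : ∀ x, 0 ≤ h x)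
    (hc : ∀ x ∈ Icc u v, c ≤ h x) : (v - u) * c ≤ ∫ x in a..b, h x :=
  calc (v - u) * c = ∫ _ in u..v, c := by rw [intervalIntegral.integral_const, smul_eq_mul]
    _ ≤ ∫ x in u..v, h x := intervalIntegral.integral_mono_on huv intervalIntegrable_const
        (hint.mono_set (by
          rw [uIcc_of_le huv, uIcc_of_le (hau.trans (huv.trans hvb))]
          exact Icc_subset_Icc hau hvb)) hc
    _ ≤ ∫ x in a..b, h x :=
        intervalIntegral.integral_mono_interval hau huv hvb (ae_of_all _ hnonneg) hint

lemma mul_rpow_le_integral_of_two_mul_le_abs_sub {f g : ℝ → ℝ} {a b x δ ε p : ℝ} (hp : 0 ≤ p)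
    (hg : MonotoneOn g (Icc a b)) (hδ : 0 ≤ δ) (hxa : a ≤ x - δ) (hxb : x + δ ≤ b)
    (hf : ∀ y ∈ Icc (x - δ) (x + δ), |f y - f x| ≤ ε)
    (hint : IntervalIntegrable (fun y => |f y - g y| ^ p) volume a b)
    (hgx : 2 * ε ≤ |g x - f x|) : δ * ε ^ p ≤ ∫ y in a..b, |f y - g y| ^ p := by
  have hε : 0 ≤ ε := by simpa using hf x ⟨by linarith, by linarith⟩
  have hx : x ∈ Icc a b := ⟨by linarith, by linarith⟩
  have hlower : ∀ u v, a ≤ u → v ≤ b → v - u = δ → (∀ y ∈ Icc u v, ε ≤ |f y - g y|) →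
      δ * ε ^ p ≤ ∫ y in a..b, |f y - g y| ^ p := fun u v hu hv huv h => huv ▸
    mul_le_integral_of_le_on_Icc hu (by linarith) hv hint (fun _ => by positivity)
      fun y hy => Real.rpow_le_rpow hε (h y hy) hp
  rcases le_abs'.1 hgx with hlow | hhigh
  · refine hlower (x - δ) x hxa (by linarith) (by ring) fun y hy => ?_
    have hgy : g y ≤ g x := hg ⟨by linarith [hy.1], by linarith [hy.2]⟩ hx hy.2
    have hfy := abs_le.1 (hf y ⟨hy.1, by linarith [hy.2]⟩)
    exact le_abs.2 (Or.inl (by linarith))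
  · refine hlower x (x + δ) (by linarith) hxb (by ring) fun y hy => ?_
    have hgy : g x ≤ g y := hg hx ⟨by linarith [hy.1], by linarith [hy.2]⟩ hy.1
    have hfy := abs_le.1 (hf y ⟨by linarith [hy.1], hy.2⟩)
    exact le_abs.2 (Or.inr (by linarith))

theorem tendstoUniformlyOn_of_tendsto_integral_rpow_abs_sub {ι : Type*} {ℓ : Filter ι}
    {f : ℝ → ℝ} {g : ι → ℝ → ℝ} {a b c d p : ℝ} (hp : 0 ≤ p) (hf : ContinuousOn f (Icc a b))
    (hg : ∀ i, MonotoneOn (g i) (Icc a b))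
    (hint : ∀ i, IntervalIntegrable (fun x => |f x - g i x| ^ p) volume a b)
    (hlim : Tendsto (fun i => ∫ x in a..b, |f x - g i x| ^ p) ℓ (𝓝 0)) (hac : a < c)
    (hdb : d < b) : TendstoUniformlyOn g f ℓ (Icc c d) := by
  rw [Metric.tendstoUniformlyOn_iff]
  intro ε hε
  obtain ⟨δ', hδ', hfδ⟩ := Metric.uniformContinuousOn_iff.1
    (isCompact_Icc.uniformContinuousOn_of_continuous hf) (ε / 2) (half_pos hε)
  set δ := min (δ' / 2) (min (c - a) (b - d))
  have hδ : 0 < δ := lt_min (half_pos hδ') (lt_min (sub_pos.2 hac) (sub_pos.2 hdb))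
  have hδδ' : δ < δ' := (min_le_left _ _).trans_lt (half_lt_self hδ')
  have hδa : δ ≤ c - a := (min_le_right _ _).trans (min_le_left _ _)
  have hδb : δ ≤ b - d := (min_le_right _ _).trans (min_le_right _ _)
  filter_upwards [hlim.eventually
    (gt_mem_nhds (mul_pos hδ (Real.rpow_pos_of_pos (half_pos hε) p)))] with i hi x hx
  rw [Real.dist_eq, abs_sub_comm]
  by_contra! hbig
  have hxab : x ∈ Icc a b := ⟨by linarith [hx.1], by linarith [hx.2]⟩
  refine hi.not_ge (mul_rpow_le_integral_of_two_mul_le_abs_sub (x := x) hp (hg i) hδ.le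
    (by linarith [hx.1]) (by linarith [hx.2]) (fun y hy => ?_) (hint i) (by linarith))
  have hyab : y ∈ Icc a b := ⟨by linarith [hy.1, hx.1], by linarith [hy.2, hx.2]⟩
  refine (Real.dist_eq _ _ ▸ hfδ y hyab x hxab ?_).le
  rw [Real.dist_eq]
  exact (abs_sub_le_iff.2 ⟨by linarith [hy.2], by linarith [hy.1]⟩).trans_lt hδδ'

/-- If `f` is continuous and nondecreasing on `[a,b]`, `(Δₙ)` is a sequence of partitions with
mesh tending to `0`, `m ≥ 2l+1` and `p ∈ [1,∞)`, then the best `Lᵖ` approximations `SIₙ` of `f`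
among nondecreasing `Δₙ`-piecewise polynomials of degree `≤ m` in `C^l[a,b]` converge to `f`
uniformly on every compact interval `[c,d]` with `a < c < d < b`. -/
theorem stmt10 (a b : ℝ) (hab : a < b) (p : ℝ) (hp : 1 ≤ p)
    (f : ℝ → ℝ) (hf_cont : ContinuousOn f (Set.Icc a b))
    (hf_mono : MonotoneOn f (Set.Icc a b))
    (l m : ℕ) (hm : 2 * l + 1 ≤ m)
    (k : ℕ → ℕ) (hk : ∀ n, 1 ≤ k n) (α : ℕ → ℕ → ℝ)
    (hα0 : ∀ n, α n 0 = a) (hαk : ∀ n, α n (k n) = b)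
    (hαinc : ∀ n, ∀ i < k n, α n i < α n (i + 1))
    (d : ℕ → ℝ) (hd : ∀ n, ∀ i < k n, α n (i + 1) - α n i ≤ d n)
    (hmesh : Tendsto d atTop (nhds 0))
    (SI : ℕ → ℝ → ℝ)
    (hSI_mem : ∀ n, SI n ∈ SIcone a b (α n) (k n) m l)
    (hSI_best : ∀ n, ∀ g ∈ SIcone a b (α n) (k n) m l,
      (∫ x in a..b, |f x - SI n x| ^ p) ^ (1 / p) ≤
        (∫ x in a..b, |f x - g x| ^ p) ^ (1 / p)) :
    ∀ c d : ℝ, a < c → c < d → d < b →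
      TendstoUniformlyOn SI f atTop (Set.Icc c d) := by
  intro c e hac _ heb
  have hp0 : 0 < p := zero_lt_one.trans_le hp
  refine tendstoUniformlyOn_of_tendsto_integral_rpow_abs_sub hp0.le hf_cont (fun n => (hSI_mem n).1)
    (fun n => ?_) ?_ hac heb
  · exact ContinuousOn.intervalIntegrable_of_Icc hab.le <|
      (hf_cont.sub (hSI_mem n).2.1.continuousOn).abs.rpow_const fun _ _ => Or.inr hp0.le
  · exact tendsto_integral_rpow_abs_sub_of_best_SIcone hab.le hp0 hf_cont hf_mono hm hk hα0 hαk
      (fun n => strictMonoOn_Iic_of_lt_succ (hαinc n)) hd hmesh hSI_best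
end
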